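/- For every non-negative integer s, the alternating quantifier depth of the first-order sentence KEIN_s on rooted, locally finite trees is exactly s; that is, KEIN_s is expressible by a first-order sentence whose nested quantifier sequences have at most s alternations between existential and universal quantifiers, but not by any first-order sentence whose nested quantifier sequences have at most s-1 such alternations. -/

import Mathlib

/-! ## Rooted trees -/

/-- A rooted tree structure: a vertex type, a root, and a parent map
(`parent v = none` is intended to hold exactly when `v` is the root). -/
structure RTree where
  V : Type
  root : V
  parent : V → Option V

namespace RTree

/-- Iterate the parent map `n` times. -/
def parentIter (T : RTree) : ℕ → T.V → Option T.V
  | 0, v => some v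
  | n + 1, v => (T.parent v).bind (T.parentIter n)

/-- `u` is a descendant of `v` (possibly `u = v`). -/
def IsDesc (T : RTree) (v u : T.V) : Prop :=
  ∃ n, T.parentIter n u = some v

/-- The structure is a genuine rooted, locally finite tree:
exactly the root has no parent, every vertex reaches the root by iterating
the parent map (connectivity and acyclicity), and every vertex has finitely
many children (local finiteness). -/
def IsTree (T : RTree) : Prop :=
  (∀ v, T.parent v = none ↔ v = T.root) ∧
  (∀ v, ∃ n, T.parentIter n v = some T.root) ∧
  (∀ v, {u | T.parent u = some v}.Finite)

open Classical in
/-- The subtree `T(v)` consisting of `v` and all its descendants, rooted at `v`. -/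
noncomputable def subtree (T : RTree) (v : T.V) : RTree where
  V := {u : T.V // T.IsDesc v u}
  root := ⟨v, 0, rfl⟩
  parent u :=
    if u.1 = v then none
    else (T.parent u.1).bind fun w =>
      if h : T.IsDesc v w then some ⟨w, h⟩ else none

end RTree

/-- An isomorphism of rooted trees: a bijection of vertices mapping root to
root and commuting with the parent maps. -/
structure TreeIso (S T : RTree) where
  toEquiv : S.V ≃ T.V
  map_root : toEquiv S.root = T.root
  map_parent : ∀ v, (S.parent v).map toEquiv = T.parent (toEquiv v)

/-! ## First-order logic of rooted trees -/

/-- Terms: variables (de Bruijn indices) and the constant `R` for the root. -/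
inductive FOTerm where
  | var : ℕ → FOTerm
  | root : FOTerm
deriving DecidableEq

/-- First-order formulas in the language of rooted trees: equality `x = y`,
the parent relation `parentOf t t'` (meaning `π(t') = t`, i.e. `t` is the
parent of `t'`), Boolean connectives, and quantifiers (de Bruijn style). -/
inductive FOFormula where
  | eq : FOTerm → FOTerm → FOFormula
  | parentOf : FOTerm → FOTerm → FOFormula
  | not : FOFormula → FOFormula
  | and : FOFormula → FOFormula → FOFormula
  | or : FOFormula → FOFormula → FOFormula
  | imp : FOFormula → FOFormula → FOFormula
  | all : FOFormula → FOFormula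
  | ex : FOFormula → FOFormula
deriving DecidableEq

namespace FOTerm

def eval (T : RTree) (env : ℕ → T.V) : FOTerm → T.V
  | var n => env n
  | root => T.root

def freeBound : FOTerm → ℕ
  | var n => n + 1
  | root => 0

end FOTerm

/-- Kinds of quantifiers, used to count alternations. -/
inductive QKind where
  | ex | all
deriving DecidableEq

/-- The dual of a quantifier kind. -/
def QKind.dual : QKind → QKind
  | .ex => .all
  | .all => .ex

namespace FOFormula

/-- Satisfaction of a formula in a rooted tree under an environment. -/
def Sat (T : RTree) : FOFormula → (ℕ → T.V) → Prop
  | eq t₁ t₂, env => t₁.eval T env = t₂.eval T env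
  | parentOf t₁ t₂, env => T.parent (t₂.eval T env) = some (t₁.eval T env)
  | not φ, env => ¬ φ.Sat T env
  | and φ ψ, env => φ.Sat T env ∧ ψ.Sat T env
  | or φ ψ, env => φ.Sat T env ∨ ψ.Sat T env
  | imp φ ψ, env => φ.Sat T env → ψ.Sat T env
  | all φ, env => ∀ w : T.V, φ.Sat T (fun n => match n with | 0 => w | Nat.succ k => env k)
  | ex φ, env => ∃ w : T.V, φ.Sat T (fun n => match n with | 0 => w | Nat.succ k => env k)

/-- Quantifier depth: the maximum number of nested quantifiers. -/
def qd : FOFormula → ℕ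
  | eq _ _ => 0
  | parentOf _ _ => 0
  | not φ => φ.qd
  | and φ ψ => max φ.qd ψ.qd
  | or φ ψ => max φ.qd ψ.qd
  | imp φ ψ => max φ.qd ψ.qd
  | all φ => φ.qd + 1
  | ex φ => φ.qd + 1

/-- Auxiliary alternation count: `aqdAux φ pol q` is the maximum number of
alternations between (effectively) existential and universal quantifiers along
a nested quantifier sequence of `φ`, given the current polarity `pol`
(`true` = positive; negations and antecedents of implications flip it, so that
e.g. a `∀` under a negation counts as an `∃`) and the effective kind `q` of
the innermost enclosing quantifier (if any). -/
def aqdAux : FOFormula → Bool → Option QKind → ℕ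
  | eq _ _, _, _ => 0
  | parentOf _ _, _, _ => 0
  | not φ, pol, q => φ.aqdAux (!pol) q
  | and φ ψ, pol, q => max (φ.aqdAux pol q) (ψ.aqdAux pol q)
  | or φ ψ, pol, q => max (φ.aqdAux pol q) (ψ.aqdAux pol q)
  | imp φ ψ, pol, q => max (φ.aqdAux (!pol) q) (ψ.aqdAux pol q)
  | all φ, pol, q =>
      (if q = some (if pol then QKind.ex else QKind.all) then 1 else 0) +
        φ.aqdAux pol (some (if pol then QKind.all else QKind.ex))
  | ex φ, pol, q =>
      (if q = some (if pol then QKind.all else QKind.ex) then 1 else 0) +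
        φ.aqdAux pol (some (if pol then QKind.ex else QKind.all))

/-- The number of alternations of quantifiers of a formula: the maximum number
of switches between (effectively) existential and universal quantifiers in a
nested quantifier sequence.  Purely existential or purely universal formulas
have `aqd = 0`. -/
def aqd (φ : FOFormula) : ℕ := φ.aqdAux true none

/-- A bound on the free variables of a formula: all free de Bruijn indices
are `< freeBound`. -/
def freeBound : FOFormula → ℕ
  | eq t₁ t₂ => max t₁.freeBound t₂.freeBound
  | parentOf t₁ t₂ => max t₁.freeBound t₂.freeBound
  | not φ => φ.freeBound
  | and φ ψ => max φ.freeBound ψ.freeBound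
  | or φ ψ => max φ.freeBound ψ.freeBound
  | imp φ ψ => max φ.freeBound ψ.freeBound
  | all φ => φ.freeBound - 1
  | ex φ => φ.freeBound - 1

/-- A sentence is a formula with no free variables. -/
def IsSentence (φ : FOFormula) : Prop := φ.freeBound = 0

end FOFormula

/-- A (closed) formula holds in a rooted tree. -/
def Models (T : RTree) (φ : FOFormula) : Prop :=
  φ.Sat T (fun _ => T.root)

/-- The formula `P_i(x)`, with free variable `x` being de Bruijn index `0`:
`P_0(x) = ∀ y ¬(π(y) = x)` and `P_{i+1}(x) = ∀ y (π(y) = x → ¬ P_i(y))`. -/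
def Pform : ℕ → FOFormula
  | 0 => .all (.not (.parentOf (.var 1) (.var 0)))
  | i + 1 => .all (.imp (.parentOf (.var 1) (.var 0)) (.not (Pform i)))

/-- The sentence `KEIN_i = P_i(R)`. -/
def KEIN : ℕ → FOFormula
  | 0 => .all (.not (.parentOf .root (.var 0)))
  | i + 1 => .all (.imp (.parentOf .root (.var 0)) (.not (Pform i)))

/-! ## Ehrenfeucht games -/

/-- The winning condition for Duplicator: for all pairs `(x_i, y_i)`, `(x_j, y_j)`
in the list of selected/designated pairs, (Main 1) `π(x_j) = x_i ↔ π(y_j) = y_i`,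
and (Main 2) `x_i = x_j ↔ y_i = y_j`. -/
def GoodPairs (T₁ T₂ : RTree) (ps : List (T₁.V × T₂.V)) : Prop :=
  ∀ p ∈ ps, ∀ q ∈ ps,
    (T₁.parent p.1 = some q.1 ↔ T₂.parent p.2 = some q.2) ∧
    (p.1 = q.1 ↔ p.2 = q.2)

/-- Duplicator wins the scheduled Ehrenfeucht game on `T₁, T₂` in which Spoiler
must play his moves in consecutive batches, the batch sizes given by the list
`sched`, switching trees after each batch; `side = true` means Spoiler currently
plays on `T₁` (Duplicator answering on `T₂`), `side = false` means Spoiler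
currently plays on `T₂`.  The list `ps` records the pairs selected so far
(including designated pairs and the pair of roots); Duplicator wins when the
final configuration satisfies `GoodPairs`. -/
def DupWinsSched (T₁ T₂ : RTree) : List ℕ → Bool → List (T₁.V × T₂.V) → Prop
  | [], _, ps => GoodPairs T₁ T₂ ps
  | 0 :: rest, side, ps => DupWinsSched T₁ T₂ rest (!side) ps
  | (n + 1) :: rest, side, ps =>
      if side then
        ∀ x : T₁.V, ∃ y : T₂.V, DupWinsSched T₁ T₂ (n :: rest) side ((x, y) :: ps)
      else
        ∀ y : T₂.V, ∃ x : T₁.V, DupWinsSched T₁ T₂ (n :: rest) side ((x, y) :: ps)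
termination_by sched _ _ => (sched.length, sched.sum)
decreasing_by
  all_goals
    first
      | exact Prod.Lex.left _ _ (Nat.lt_succ_self _)
      | exact Prod.Lex.right _ (by simp [List.sum_cons])

/-- The cost (in switches) for Spoiler of playing on side `side` when his
previous move (if any) was on side `last`. -/
def switchCost (last : Option Bool) (side : Bool) : ℕ :=
  match last with
  | none => 0
  | some b => if b = side then 0 else 1

/-- Duplicator wins the Ehrenfeucht game `EHR` with `rounds` remaining rounds,
`sw` remaining switches allowed to Spoiler, `last` the side on which Spoiler
made his previous move (if any), and `ps` the pairs selected so far.  In each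
round Spoiler picks a side (paying a switch if he changes trees, which he may
do only if he has switches left) and a vertex in that tree, and Duplicator
answers in the other tree. -/
def DupWinsEHRAux (T₁ T₂ : RTree) :
    ℕ → ℕ → Option Bool → List (T₁.V × T₂.V) → Prop
  | 0, _, _, ps => GoodPairs T₁ T₂ ps
  | r + 1, sw, last, ps =>
      ∀ side : Bool, switchCost last side ≤ sw →
        if side then
          ∀ x : T₁.V, ∃ y : T₂.V,
            DupWinsEHRAux T₁ T₂ r (sw - switchCost last side) (some side) ((x, y) :: ps)
        else
          ∀ y : T₂.V, ∃ x : T₁.V,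
            DupWinsEHRAux T₁ T₂ r (sw - switchCost last side) (some side) ((x, y) :: ps)

/-- Duplicator wins the game `EHR[T₁, T₂, s, r]`: `r` rounds, Spoiler may start
on either tree and make at most `s` switches. -/
def DupWinsEHR (T₁ T₂ : RTree) (s r : ℕ) : Prop :=
  DupWinsEHRAux T₁ T₂ r s none [(T₁.root, T₂.root)]

/-! ## The trees `T₁^{(s,k,m)}` and `T₂^{(s,k,m)}` -/

/-- The one-vertex rooted tree. -/
def single : RTree where
  V := PUnit
  root := PUnit.unit
  parent := fun _ => none

/-- Hang the trees `f 0, …, f (n-1)` from a new root: the root of each `f i`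
becomes a child of the new root. -/
def hang (n : ℕ) (f : Fin n → RTree) : RTree where
  V := Unit ⊕ (Σ i : Fin n, (f i).V)
  root := Sum.inl ()
  parent := fun x =>
    match x with
    | Sum.inl _ => none
    | Sum.inr ⟨i, w⟩ =>
      match (f i).parent w with
      | none => some (Sum.inl ())
      | some w' => some (Sum.inr ⟨i, w'⟩)

/-- The pair of trees `(T₁^{(s,k,m)}, T₂^{(s,k,m)})`, indexed by `s` (the
parameter `k` plays no role in the construction).  Conventions for `s = 0`:
`T₁^{(0)}` is a single vertex and `T₂^{(0)}` is a star of `m` childless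
children.  For `s ≥ 1`: in `T₁^{(s+1)}` the root has `m+1` children, from each
of which hangs a copy of `T₂^{(s)}`; in `T₂^{(s+1)}` the root has `m+1`
children, from `m` of which hangs a copy of `T₂^{(s)}` and from the remaining
one hangs a copy of `T₁^{(s)}`. -/
def TreePair (m : ℕ) : ℕ → RTree × RTree
  | 0 => (single, hang m fun _ => single)
  | s + 1 =>
      (hang (m + 1) fun _ => (TreePair m s).2,
       hang (m + 1) fun i => if i.1 = m then (TreePair m s).1 else (TreePair m s).2)

/-- The tree `T₁^{(s,k,m)}`. -/
def Tree1 (s k m : ℕ) : RTree := (TreePair m s).1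

/-- The tree `T₂^{(s,k,m)}`. -/
def Tree2 (s k m : ℕ) : RTree := (TreePair m s).2

/-!
`KEIN_s` itself has `s` alternations. For the lower bound, let `T₁^{(0)}` be a single vertex and
`T₂^{(0)}` a star; `T₁^{(j+1)}` has `m + 1` children carrying `T₂^{(j)}`, and `T₂^{(j+1)}` has `m`
of them and one special child carrying `T₁^{(j)}`. `KEIN_s` holds in `T₁^{(s)}` but not in
`T₂^{(s)}`. For `m` large, Duplicator wins the `r`-round game on these trees in which Spoiler may
switch trees `s - 1` times: she matches nodes of equal type, answering special children by special
children and everything else by fresh non-special children, except that a copy of `T₁^{(j)}` may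
be matched with a copy of `T₂^{(j)}`. Telling those two apart forces Spoiler to descend along
special children, changing trees at every level, which needs `j` switches. By the soundness of
this game, no sentence of quantifier depth `r` with fewer than `s` alternations separates the trees.
-/

namespace FOFormula

theorem aqdAux_le_qd (φ : FOFormula) (pol : Bool) (q : Option QKind) : φ.aqdAux pol q ≤ φ.qd := by
  induction φ generalizing pol q with
  | eq | parentOf => simp [aqdAux, qd]
  | not φ ih => exact ih _ _
  | and φ ψ ihφ ihψ | or φ ψ ihφ ihψ | imp φ ψ ihφ ihψ =>
    simp only [aqdAux, qd]
    exact max_le_max (ihφ _ _) (ihψ _ _)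
  | all φ ih | ex φ ih =>
    rw [aqdAux, qd, add_comm]
    exact add_le_add (ih _ _) (by split_ifs <;> simp)

theorem aqdAux_not_dual (φ : FOFormula) (pol : Bool) (q : Option QKind) :
    φ.aqdAux (!pol) (q.map QKind.dual) = φ.aqdAux pol q := by
  induction φ generalizing pol q with
  | eq | parentOf => rfl
  | not φ ih => exact ih _ _
  | and φ ψ ihφ ihψ | or φ ψ ihφ ihψ | imp φ ψ ihφ ihψ => simp only [aqdAux, ihφ, ihψ]
  | all φ ih | ex φ ih =>
    have ih' := ih pol (some (if pol then .all else .ex))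
    have ih'' := ih pol (some (if pol then .ex else .all))
    cases pol <;> rcases q with _ | ⟨_ | _⟩ <;> simp_all [aqdAux, QKind.dual]

end FOFormula

theorem qd_Pform (i : ℕ) : (Pform i).qd = i + 1 := by
  induction i with
  | zero => rfl
  | succ i ih => simp [Pform, FOFormula.qd, ih]

theorem freeBound_Pform (i : ℕ) : (Pform i).freeBound = 1 := by
  induction i with
  | zero => rfl
  | succ i ih => simp [Pform, FOFormula.freeBound, FOTerm.freeBound, ih]

theorem KEIN_isSentence (s : ℕ) : (KEIN s).IsSentence := by
  cases s <;> simp [KEIN, FOFormula.IsSentence, FOFormula.freeBound, FOTerm.freeBound,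
    freeBound_Pform]

theorem KEIN_aqd_le (s : ℕ) : (KEIN s).aqd ≤ s := by
  cases s with
  | zero => exact le_rfl
  | succ s =>
    have := (Pform s).aqdAux_le_qd false (some .all)
    simp_all [KEIN, FOFormula.aqd, FOFormula.aqdAux, qd_Pform]

def RTree.P (T : RTree) : ℕ → T.V → Prop
  | 0, v => ∀ u, T.parent u ≠ some v
  | i + 1, v => ∀ u, T.parent u = some v → ¬ T.P i u

theorem sat_Pform (i : ℕ) (T : RTree) (env : ℕ → T.V) :
    (Pform i).Sat T env ↔ T.P i (env 0) := by
  induction i generalizing env with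
  | zero => rfl
  | succ i ih => exact forall_congr' fun u => imp_congr_right fun _ => not_congr (ih _)

theorem models_KEIN_iff (i : ℕ) (T : RTree) : Models T (KEIN i) ↔ T.P i T.root := by
  cases i with
  | zero => rfl
  | succ i => exact forall_congr' fun u => imp_congr_right fun _ => not_congr (sat_Pform i T _)

/-- Spoiler answers an effectively existential quantifier by playing in the first tree
(side `true`). -/
def QKind.ofSide : Bool → QKind
  | true => .ex
  | false => .all

namespace FOFormula

theorem aqdAux_not_ofSide (φ : FOFormula) (last : Option Bool) :
    φ.not.aqdAux true (last.map QKind.ofSide) =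
      φ.aqdAux true ((last.map Bool.not).map QKind.ofSide) := by
  rw [aqdAux, ← φ.aqdAux_not_dual true]
  congr 1
  rcases last with _ | ⟨_ | _⟩ <;> rfl

theorem aqdAux_all_ofSide (φ : FOFormula) (last : Option Bool) :
    φ.all.aqdAux true (last.map QKind.ofSide) =
      switchCost last false + φ.aqdAux true (some (QKind.ofSide false)) := by
  rcases last with _ | ⟨_ | _⟩ <;> rfl

theorem aqdAux_ex_ofSide (φ : FOFormula) (last : Option Bool) :
    φ.ex.aqdAux true (last.map QKind.ofSide) =
      switchCost last true + φ.aqdAux true (some (QKind.ofSide true)) := by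
  rcases last with _ | ⟨_ | _⟩ <;> rfl

end FOFormula

theorem switchCost_map_not (last : Option Bool) (side : Bool) :
    switchCost (last.map Bool.not) side = switchCost last (!side) := by
  rcases last with _ | ⟨_ | _⟩ <;> cases side <;> rfl

theorem switchCost_getD_self (last : Option Bool) (side : Bool) :
    switchCost last (last.getD side) = 0 := by
  rcases last with _ | ⟨_ | _⟩ <;> rfl

section Game

variable {T₁ T₂ : RTree}

theorem GoodPairs.mono {ps ps' : List (T₁.V × T₂.V)} (h : GoodPairs T₁ T₂ ps') (hsub : ps ⊆ ps') :
    GoodPairs T₁ T₂ ps :=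
  fun p hp q hq => h p (hsub hp) q (hsub hq)

theorem GoodPairs.swap {ps : List (T₁.V × T₂.V)} (h : GoodPairs T₁ T₂ ps) :
    GoodPairs T₂ T₁ (ps.map Prod.swap) := by
  simp only [GoodPairs, List.mem_map, forall_exists_index, and_imp]
  rintro _ p hp rfl _ q hq rfl
  exact ⟨(h p hp q hq).1.symm, (h p hp q hq).2.symm⟩

theorem DupWinsEHRAux.goodPairs {r sw : ℕ} {last : Option Bool} {ps : List (T₁.V × T₂.V)}
    (h : DupWinsEHRAux T₁ T₂ r sw last ps) : GoodPairs T₁ T₂ ps := by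
  induction r generalizing sw last ps with
  | zero => exact h
  | succ r ih =>
    have h' := h (last.getD true) (by simp [switchCost_getD_self])
    split at h'
    · obtain ⟨y, hy⟩ := h' T₁.root
      exact (ih hy).mono (List.subset_cons_self _ _)
    · obtain ⟨x, hx⟩ := h' T₂.root
      exact (ih hx).mono (List.subset_cons_self _ _)

theorem DupWinsEHRAux.swap {r sw : ℕ} {last : Option Bool} {ps : List (T₁.V × T₂.V)}
    (h : DupWinsEHRAux T₁ T₂ r sw last ps) :
    DupWinsEHRAux T₂ T₁ r sw (last.map Bool.not) (ps.map Prod.swap) := by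
  induction r generalizing sw last ps with
  | zero => exact GoodPairs.swap h
  | succ r ih =>
    intro side hcost
    rw [switchCost_map_not] at hcost ⊢
    have h' := h (!side) hcost
    cases side
    · intro x
      obtain ⟨y, hy⟩ := h' x
      exact ⟨y, ih hy⟩
    · intro y
      obtain ⟨x, hx⟩ := h' y
      exact ⟨x, ih hx⟩

theorem FOTerm.eval_mem {ps : List (T₁.V × T₂.V)} (hroot : (T₁.root, T₂.root) ∈ ps) {k : ℕ}
    {η₁ : ℕ → T₁.V} {η₂ : ℕ → T₂.V} (henv : ∀ n < k, (η₁ n, η₂ n) ∈ ps)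
    (t : FOTerm) (ht : t.freeBound ≤ k) : (t.eval T₁ η₁, t.eval T₂ η₂) ∈ ps := by
  cases t with
  | var n => exact henv n ht
  | root => exact hroot

theorem env_cons_mem {ps : List (T₁.V × T₂.V)} {k : ℕ} {η₁ : ℕ → T₁.V} {η₂ : ℕ → T₂.V}
    (henv : ∀ n < k - 1, (η₁ n, η₂ n) ∈ ps) (x : T₁.V) (y : T₂.V) :
    ∀ n < k, ((fun n => match n with | 0 => x | Nat.succ i => η₁ i) n,
      (fun n => match n with | 0 => y | Nat.succ i => η₂ i) n) ∈ (x, y) :: ps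
  | 0, _ => List.mem_cons_self
  | n + 1, hn => List.mem_cons_of_mem _ (henv n (by omega))

open FOFormula in
/-- Only positive polarity is needed: a negation is handled by exchanging the two trees. -/
theorem DupWinsEHRAux.sat_imp_sat {φ : FOFormula} {r sw : ℕ} {last : Option Bool}
    {ps : List (T₁.V × T₂.V)} {η₁ : ℕ → T₁.V} {η₂ : ℕ → T₂.V}
    (hwin : DupWinsEHRAux T₁ T₂ r sw last ps) (hroot : (T₁.root, T₂.root) ∈ ps)
    (henv : ∀ n < φ.freeBound, (η₁ n, η₂ n) ∈ ps) (hqd : φ.qd ≤ r)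
    (haqd : φ.aqdAux true (last.map QKind.ofSide) ≤ sw) (h : φ.Sat T₁ η₁) : φ.Sat T₂ η₂ := by
  induction φ generalizing T₁ T₂ r sw last ps η₁ η₂ with
  | eq t₁ t₂ =>
    exact ((hwin.goodPairs _ (t₁.eval_mem hroot henv (le_max_left _ _)) _
      (t₂.eval_mem hroot henv (le_max_right _ _))).2).1 h
  | parentOf t₁ t₂ =>
    exact ((hwin.goodPairs _ (t₂.eval_mem hroot henv (le_max_right _ _)) _
      (t₁.eval_mem hroot henv (le_max_left _ _))).1).1 h
  | not φ ih =>
    rw [aqdAux_not_ofSide] at haqd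
    exact fun h₂ => h (ih hwin.swap (List.mem_map_of_mem hroot)
      (fun n hn => List.mem_map_of_mem (henv n hn)) hqd haqd h₂)
  | and φ ψ ihφ ihψ =>
    simp only [freeBound, qd, aqdAux, max_le_iff] at henv hqd haqd
    exact ⟨ihφ hwin hroot (fun n hn => henv n (hn.trans_le (le_max_left _ _))) hqd.1 haqd.1 h.1,
      ihψ hwin hroot (fun n hn => henv n (hn.trans_le (le_max_right _ _))) hqd.2 haqd.2 h.2⟩
  | or φ ψ ihφ ihψ =>
    simp only [freeBound, qd, aqdAux, max_le_iff] at henv hqd haqd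
    exact h.imp
      (ihφ hwin hroot (fun n hn => henv n (hn.trans_le (le_max_left _ _))) hqd.1 haqd.1)
      (ihψ hwin hroot (fun n hn => henv n (hn.trans_le (le_max_right _ _))) hqd.2 haqd.2)
  | imp φ ψ ihφ ihψ =>
    simp only [freeBound, qd, aqdAux, max_le_iff] at henv hqd haqd
    have hφ : φ.not.aqdAux true (last.map QKind.ofSide) ≤ sw := haqd.1
    rw [aqdAux_not_ofSide] at hφ
    refine fun h₂ => ihψ hwin hroot (fun n hn => henv n (hn.trans_le (le_max_right _ _)))
      hqd.2 haqd.2 (h ?_)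
    exact ihφ hwin.swap (List.mem_map_of_mem hroot)
      (fun n hn => List.mem_map_of_mem (henv n (hn.trans_le (le_max_left _ _)))) hqd.1 hφ h₂
  | all φ ih =>
    obtain _ | r := r
    · simp [qd] at hqd
    rw [aqdAux_all_ofSide] at haqd
    intro y
    obtain ⟨x, hwin'⟩ := hwin false (by omega) y
    exact ih hwin' (List.mem_cons_of_mem _ hroot) (env_cons_mem henv x y)
      (Nat.le_of_succ_le_succ hqd) (by rw [Option.map_some]; omega) (h x)
  | ex φ ih =>
    obtain _ | r := r
    · simp [qd] at hqd
    rw [aqdAux_ex_ofSide] at haqd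
    obtain ⟨x, hx⟩ := h
    obtain ⟨y, hwin'⟩ := hwin true (by omega) x
    exact ⟨y, ih hwin' (List.mem_cons_of_mem _ hroot) (env_cons_mem henv x y)
      (Nat.le_of_succ_le_succ hqd) (by rw [Option.map_some]; omega) hx⟩

theorem DupWinsEHR.models_imp_models {sw r : ℕ} (h : DupWinsEHR T₁ T₂ sw r) {B : FOFormula}
    (hB : B.IsSentence) (hqd : B.qd ≤ r) (haqd : B.aqd ≤ sw) (h₁ : Models T₁ B) :
    Models T₂ B :=
  DupWinsEHRAux.sat_imp_sat h List.mem_cons_self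
    (fun n hn => absurd (hB ▸ hn) (Nat.not_lt_zero n)) hqd haqd h₁

end Game

/-- `(j, true)` is the type of the root of `T₁^{(j)}`, `(j, false)` that of `T₂^{(j)}`. -/
abbrev NodeType := ℕ × Bool

/-- The children of a node are indexed by `Fin (m + 1)`; in `T₂^{(j+1)}` the special child,
carrying `T₁^{(j)}`, has index `Fin.last m`. -/
def childType (m : ℕ) (x : Fin (m + 1)) : NodeType → Option NodeType
  | (0, true) => none
  | (0, false) => some (0, true)
  | (j + 1, true) => some (j, false)
  | (j + 1, false) => some (if x = Fin.last m then (j, true) else (j, false))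

theorem childType_eq_of_ne_last {m : ℕ} {x y : Fin (m + 1)} (hx : x ≠ Fin.last m)
    (hy : y ≠ Fin.last m) (t : NodeType) : childType m x t = childType m y t := by
  rcases t with ⟨_ | _, _ | _⟩ <;> simp [childType, hx, hy]

/-- Sequences of child indices, read from the node up to the root. -/
abbrev IndexPath (m : ℕ) := List (Fin (m + 1))

def typeAt (m : ℕ) (σ : NodeType) : IndexPath m → Option NodeType
  | [] => some σ
  | x :: p => (typeAt m σ p).bind (childType m x)

theorem typeAt_cons {m : ℕ} {σ : NodeType} {x : Fin (m + 1)} {p : IndexPath m} {t : NodeType}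
    (h : typeAt m σ p = some t) : typeAt m σ (x :: p) = childType m x t := by
  simp [typeAt, h]

theorem isSome_typeAt_of_cons {m : ℕ} {σ : NodeType} {x : Fin (m + 1)} {p : IndexPath m}
    (h : (typeAt m σ (x :: p)).isSome) : (typeAt m σ p).isSome := by
  cases hp : typeAt m σ p <;> simp_all [typeAt]

def PathTree (m : ℕ) (σ : NodeType) : RTree where
  V := {p : IndexPath m // (typeAt m σ p).isSome}
  root := ⟨[], rfl⟩
  parent
    | ⟨[], _⟩ => none
    | ⟨_ :: p, h⟩ => some ⟨p, isSome_typeAt_of_cons h⟩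

namespace PathTree

variable {m : ℕ} {σ : NodeType}

theorem parent_eq_some_iff {u v : (PathTree m σ).V} :
    (PathTree m σ).parent u = some v ↔ ∃ x, u.1 = x :: v.1 := by
  obtain ⟨_ | ⟨x, p⟩, hu⟩ := u
  · simp [PathTree]
  · show some (⟨p, _⟩ : (PathTree m σ).V) = some v ↔ ∃ y, x :: p = y :: v.1
    exact Option.some_inj.trans <| Subtype.ext_iff.trans
      ⟨fun h => ⟨x, congrArg _ h⟩, fun ⟨_, h⟩ => (List.cons.inj h).2⟩

theorem isTree (m : ℕ) (σ : NodeType) : (PathTree m σ).IsTree := by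
  refine ⟨?_, ?_, fun v => ?_⟩
  · rintro ⟨_ | ⟨x, p⟩, hu⟩ <;> simp [PathTree, Subtype.ext_iff]
  · rintro ⟨p, hp⟩
    induction p with
    | nil => exact ⟨0, rfl⟩
    | cons x p ih =>
      obtain ⟨n, hn⟩ := ih (isSome_typeAt_of_cons hp)
      exact ⟨n + 1, hn⟩
  · refine (Set.finite_range fun x : Fin (m + 1) =>
      if h : (typeAt m σ (x :: v.1)).isSome then (⟨x :: v.1, h⟩ : (PathTree m σ).V)
      else v).subset ?_
    intro u hu
    obtain ⟨x, hx⟩ := parent_eq_some_iff.1 hu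
    exact ⟨x, by simp [← hx, u.2]⟩

def type (v : (PathTree m σ).V) : NodeType := (typeAt m σ v.1).get v.2

theorem typeAt_eq_type (v : (PathTree m σ).V) : typeAt m σ v.1 = some (type v) :=
  Option.eq_some_of_isSome v.2

theorem forall_child_iff (v : (PathTree m σ).V) (Q : NodeType → Prop) :
    (∀ u, (PathTree m σ).parent u = some v → Q (type u)) ↔
      ∀ x t, childType m x (type v) = some t → Q t := by
  constructor
  · intro h x t ht
    have hu : typeAt m σ (x :: v.1) = some t := by rw [typeAt_cons (typeAt_eq_type v), ht]
    have htype : type (⟨x :: v.1, by simp [hu]⟩ : (PathTree m σ).V) = t :=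
      Option.get_of_eq_some _ hu
    exact htype ▸ h _ (parent_eq_some_iff.2 ⟨x, rfl⟩)
  · intro h u hu
    obtain ⟨x, hx⟩ := parent_eq_some_iff.1 hu
    have hux := typeAt_eq_type u
    rw [hx, typeAt_cons (typeAt_eq_type v)] at hux
    exact h x _ hux

end PathTree

def typeP (m : ℕ) : ℕ → NodeType → Prop
  | 0, t => ∀ x t', childType m x t ≠ some t'
  | i + 1, t => ∀ x t', childType m x t = some t' → ¬ typeP m i t'

theorem PathTree.P_iff {m : ℕ} {σ : NodeType} (i : ℕ) (v : (PathTree m σ).V) :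
    (PathTree m σ).P i v ↔ typeP m i (type v) := by
  induction i generalizing v with
  | zero => exact forall_child_iff v fun _ => False
  | succ i ih =>
    simp only [RTree.P, typeP, ← forall_child_iff v (fun t => ¬ typeP m i t), ih]

theorem typeP_self (m s : ℕ) : typeP m s (s, true) ∧ ¬ typeP m s (s, false) := by
  induction s with
  | zero => exact ⟨fun x t' => by simp [childType], fun h => h 0 _ rfl⟩
  | succ s ih =>
    refine ⟨fun x t' ht => ?_, fun h => h (Fin.last m) (s, true) (by simp [childType]) ih.1⟩
    simp only [childType, Option.some.injEq] at ht
    exact ht ▸ ih.2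

theorem models_KEIN_pathTree (m s : ℕ) :
    Models (PathTree m (s, true)) (KEIN s) ∧ ¬ Models (PathTree m (s, false)) (KEIN s) := by
  simp only [models_KEIN_iff, PathTree.P_iff]
  exact typeP_self m s

/-- Nodes of types `(j, true)` and `(j, false)` may be matched as long as Spoiler cannot afford
the switches needed to tell them apart: one to reach the `(j, false)` side if he is not there,
then one per level. -/
inductive Compatible (sw : ℕ) (last : Option Bool) : NodeType → NodeType → Prop
  | refl (t : NodeType) : Compatible sw last t t
  | one_two (j : ℕ) : sw + 1 ≤ j + switchCost last false → Compatible sw last (j, true) (j, false)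
  | two_one (j : ℕ) : sw + 1 ≤ j + switchCost last true → Compatible sw last (j, false) (j, true)

namespace Compatible

variable {sw : ℕ} {last : Option Bool} {ta tb : NodeType}

theorem swap (h : Compatible sw last ta tb) : Compatible sw (last.map Bool.not) tb ta := by
  cases h with
  | refl => exact refl _
  | one_two j hj => exact two_one j (by rwa [switchCost_map_not])
  | two_one j hj => exact one_two j (by rwa [switchCost_map_not])

theorem reanchor (h : Compatible sw last ta tb) (c : Bool) (hc : switchCost last c ≤ sw) :
    Compatible (sw - switchCost last c) (some c) ta tb := by
  have key : ∀ b j, sw + 1 ≤ j + switchCost last b →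
      sw - switchCost last c + 1 ≤ j + switchCost (some c) b := by
    intro b j hj
    rcases last with _ | ⟨_ | _⟩ <;> cases c <;> cases b <;> simp_all [switchCost] <;> omega
  cases h with
  | refl => exact refl _
  | one_two j hj => exact one_two j (key _ _ hj)
  | two_one j hj => exact two_one j (key _ _ hj)

end Compatible

theorem exists_ne_last_fresh {m : ℕ} (L : List (IndexPath m × IndexPath m)) (hL : L.length < m)
    (q : IndexPath m) : ∃ y, y ≠ Fin.last m ∧ ∀ a, (a, y :: q) ∉ L := by
  let used := insert (Fin.last m) (L.map fun ab => ab.2.headD 0).toFinset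
  have hcard : used.card < (Finset.univ : Finset (Fin (m + 1))).card := by
    calc used.card ≤ (L.map fun ab => ab.2.headD 0).toFinset.card + 1 := Finset.card_insert_le _ _
      _ ≤ L.length + 1 := by grw [List.toFinset_card_le, List.length_map]
      _ < _ := by simpa using hL
  obtain ⟨y, -, hy⟩ := Finset.exists_mem_notMem_of_card_lt_card hcard
  refine ⟨y, fun h => hy (h ▸ Finset.mem_insert_self _ _), fun a ha => hy ?_⟩
  exact Finset.mem_insert_of_mem (List.mem_toFinset.2 (List.mem_map.2 ⟨_, ha, rfl⟩))

/-- Duplicator's record of the game: `L` lists the pairs of paths matched so far. -/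
structure DupInv (m : ℕ) (σ₁ σ₂ : NodeType) (L : List (IndexPath m × IndexPath m)) (sw : ℕ)
    (last : Option Bool) : Prop where
  root_mem : ([], []) ∈ L
  compatible : ∀ a b, (a, b) ∈ L →
    ∃ ta tb, typeAt m σ₁ a = some ta ∧ typeAt m σ₂ b = some tb ∧ Compatible sw last ta tb
  eq_iff_eq : ∀ a b c d, (a, b) ∈ L → (c, d) ∈ L → (a = c ↔ b = d)
  parent_left : ∀ x p b, (x :: p, b) ∈ L → ∃ y q, b = y :: q ∧ (p, q) ∈ L
  parent_right : ∀ a y q, (a, y :: q) ∈ L → ∃ x p, a = x :: p ∧ (p, q) ∈ L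
  special : ∀ x p y q, (x :: p, y :: q) ∈ L → (p, q) ∈ L →
    typeAt m σ₁ p = typeAt m σ₂ q → (x = Fin.last m ↔ y = Fin.last m)

namespace DupInv

variable {m : ℕ} {σ₁ σ₂ : NodeType} {L : List (IndexPath m × IndexPath m)} {sw : ℕ}
  {last : Option Bool}

theorem swap (h : DupInv m σ₁ σ₂ L sw last) :
    DupInv m σ₂ σ₁ (L.map Prod.swap) sw (last.map Bool.not) where
  root_mem := List.mem_map_swap _ _ _ |>.2 h.root_mem
  compatible a b hab := by
    obtain ⟨ta, tb, hta, htb, hc⟩ := h.compatible b a (by simpa using hab)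
    exact ⟨tb, ta, htb, hta, hc.swap⟩
  eq_iff_eq a b c d hab hcd := (h.eq_iff_eq b a d c (by simpa using hab) (by simpa using hcd)).symm
  parent_left x p b hb := by
    obtain ⟨y, q, rfl, hpq⟩ := h.parent_right b x p (by simpa using hb)
    exact ⟨y, q, rfl, by simpa using hpq⟩
  parent_right a y q ha := by
    obtain ⟨x, p, rfl, hpq⟩ := h.parent_left y q a (by simpa using ha)
    exact ⟨x, p, rfl, by simpa using hpq⟩
  special x p y q h₁ h₂ htype :=
    (h.special y q x p (by simpa using h₁) (by simpa using h₂) htype.symm).symm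

theorem of_swap (h : DupInv m σ₂ σ₁ (L.map Prod.swap) sw (last.map Bool.not)) :
    DupInv m σ₁ σ₂ L sw last := by
  simpa [Function.comp_def] using h.swap

theorem isSome_right (h : DupInv m σ₁ σ₂ L sw last) {a b : IndexPath m} (hab : (a, b) ∈ L) :
    (typeAt m σ₂ b).isSome := by
  obtain ⟨_, _, _, htb, _⟩ := h.compatible a b hab
  simp [htb]

theorem reanchor (h : DupInv m σ₁ σ₂ L sw last) (c : Bool) (hc : switchCost last c ≤ sw) :
    DupInv m σ₁ σ₂ L (sw - switchCost last c) (some c) where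
  __ := h
  compatible a b hab := by
    obtain ⟨ta, tb, hta, htb, hcomp⟩ := h.compatible a b hab
    exact ⟨ta, tb, hta, htb, hcomp.reanchor c hc⟩

theorem cons (h : DupInv m σ₁ σ₂ L sw last) {p q : IndexPath m} {x y : Fin (m + 1)}
    {ta tb tc td : NodeType} (hpq : (p, q) ∈ L)
    (hta : typeAt m σ₁ p = some ta) (htb : typeAt m σ₂ q = some tb)
    (hx : ∀ b, (x :: p, b) ∉ L) (hy : ∀ a, (a, y :: q) ∉ L)
    (htc : childType m x ta = some tc) (htd : childType m y tb = some td)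
    (hcomp : Compatible sw last tc td)
    (hspecial : ta = tb → (x = Fin.last m ↔ y = Fin.last m)) :
    DupInv m σ₁ σ₂ ((x :: p, y :: q) :: L) sw last where
  root_mem := List.mem_cons_of_mem _ h.root_mem
  compatible a b hab := by
    rcases List.mem_cons.1 hab with hnew | hab
    · obtain ⟨rfl, rfl⟩ := Prod.mk.inj hnew
      exact ⟨tc, td, (typeAt_cons hta).trans htc, (typeAt_cons htb).trans htd, hcomp⟩
    · exact h.compatible a b hab
  eq_iff_eq a b c d hab hcd := by
    rcases List.mem_cons.1 hab with hab' | hab <;> rcases List.mem_cons.1 hcd with hcd' | hcd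
    · obtain ⟨rfl, rfl⟩ := Prod.mk.inj hab'
      obtain ⟨rfl, rfl⟩ := Prod.mk.inj hcd'
      exact iff_of_true rfl rfl
    · obtain ⟨rfl, rfl⟩ := Prod.mk.inj hab'
      exact iff_of_false (by rintro rfl; exact hx d hcd) (by rintro rfl; exact hy c hcd)
    · obtain ⟨rfl, rfl⟩ := Prod.mk.inj hcd'
      exact iff_of_false (by rintro rfl; exact hx b hab) (by rintro rfl; exact hy a hab)
    · exact h.eq_iff_eq a b c d hab hcd
  parent_left x' p' b hb := by
    rcases List.mem_cons.1 hb with hnew | hb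
    · simp only [Prod.mk.injEq, List.cons.injEq] at hnew
      obtain ⟨⟨rfl, rfl⟩, rfl⟩ := hnew
      exact ⟨y, q, rfl, List.mem_cons_of_mem _ hpq⟩
    · obtain ⟨y', q', rfl, hpq'⟩ := h.parent_left x' p' b hb
      exact ⟨y', q', rfl, List.mem_cons_of_mem _ hpq'⟩
  parent_right a y' q' ha := by
    rcases List.mem_cons.1 ha with hnew | ha
    · simp only [Prod.mk.injEq, List.cons.injEq] at hnew
      obtain ⟨rfl, ⟨rfl, rfl⟩⟩ := hnew
      exact ⟨x, p, rfl, List.mem_cons_of_mem _ hpq⟩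
    · obtain ⟨x', p', rfl, hpq'⟩ := h.parent_right a y' q' ha
      exact ⟨x', p', rfl, List.mem_cons_of_mem _ hpq'⟩
  special x' p' y' q' h₁ h₂ htype := by
    rcases List.mem_cons.1 h₁ with hnew | h₁
    · simp only [Prod.mk.injEq, List.cons.injEq] at hnew
      obtain ⟨⟨rfl, rfl⟩, ⟨rfl, rfl⟩⟩ := hnew
      exact hspecial (Option.some_inj.1 (hta.symm.trans (htype.trans htb)))
    rcases List.mem_cons.1 h₂ with hnew | h₂
    · obtain ⟨rfl, rfl⟩ := Prod.mk.inj hnew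
      obtain ⟨_, _, _, hmem⟩ := h.parent_left x' _ _ h₁
      exact absurd hmem (hx _)
    · exact h.special x' p' y' q' h₁ h₂ htype

/-- Duplicator answers the special child by the special child below equally typed nodes, and
anything else by a fresh non-special child. -/
theorem exists_cons (h : DupInv m σ₁ σ₂ L sw (some true)) {p q : IndexPath m} {x : Fin (m + 1)}
    (hpq : (p, q) ∈ L) (hx : ∀ b, (x :: p, b) ∉ L) (hvalid : (typeAt m σ₁ (x :: p)).isSome)
    (hL : L.length < m) : ∃ y, DupInv m σ₁ σ₂ ((x :: p, y :: q) :: L) sw (some true) := by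
  obtain ⟨ta, tb, hta, htb, hcomp⟩ := h.compatible p q hpq
  obtain ⟨tc, htc⟩ := Option.isSome_iff_exists.1 ((typeAt_cons hta).symm ▸ hvalid)
  obtain ⟨y₀, hy₀, hfresh⟩ := exists_ne_last_fresh L hL q
  cases hcomp with
  | refl =>
    by_cases hxl : x = Fin.last m
    · refine ⟨x, h.cons hpq hta htb hx ?_ htc htc (.refl _) fun _ => Iff.rfl⟩
      -- the special child of `q` is unused: by `special` it could only be matched with that of `p`
      intro a ha
      obtain ⟨z, p', rfl, hp'q⟩ := h.parent_right a x q ha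
      obtain rfl := (h.eq_iff_eq p' q p q hp'q hpq).2 rfl
      obtain rfl : z = x := by
        rw [hxl, h.special z p' x q ha hp'q (hta.trans htb.symm), hxl]
      exact hx _ ha
    · exact ⟨y₀, h.cons hpq hta htb hx hfresh htc ((childType_eq_of_ne_last hxl hy₀ ta) ▸ htc)
        (.refl _) fun _ => iff_of_false hxl hy₀⟩
  | one_two j _ =>
    obtain _ | j := j
    · simp [childType] at htc
    obtain rfl : tc = (j, false) := by simpa [childType, eq_comm] using htc
    exact ⟨y₀, h.cons hpq hta htb hx hfresh htc (by simp [childType, hy₀]) (.refl _) (by simp)⟩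
  | two_one j hj =>
    obtain _ | j := j
    · simp [switchCost] at hj
    refine ⟨y₀, h.cons (td := (j, false)) hpq hta htb hx hfresh htc rfl ?_ (by simp)⟩
    by_cases hxl : x = Fin.last m
    · obtain rfl : tc = (j, true) := by simpa [childType, hxl, eq_comm] using htc
      exact .one_two j (by simp_all [switchCost])
    · obtain rfl : tc = (j, false) := by simpa [childType, hxl, eq_comm] using htc
      exact .refl _

theorem exists_extend (h : DupInv m σ₁ σ₂ L sw (some true)) (p : IndexPath m)
    (hp : (typeAt m σ₁ p).isSome) (hL : L.length + p.length < m) :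
    ∃ L' q, L ⊆ L' ∧ (p, q) ∈ L' ∧ DupInv m σ₁ σ₂ L' sw (some true) ∧
      L'.length ≤ L.length + p.length := by
  induction p with
  | nil => exact ⟨L, [], List.Subset.refl _, h.root_mem, h, le_rfl⟩
  | cons x p ih =>
    simp only [List.length_cons] at hL ⊢
    obtain ⟨L₁, q, hsub, hpq, h₁, hlen⟩ := ih (isSome_typeAt_of_cons hp) (by omega)
    by_cases hx : ∃ b, (x :: p, b) ∈ L₁
    · obtain ⟨b, hb⟩ := hx
      exact ⟨L₁, b, hsub, hb, h₁, by omega⟩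
    simp only [not_exists] at hx
    obtain ⟨y, h'⟩ := h₁.exists_cons hpq hx hp (by omega)
    exact ⟨_, y :: q, List.Subset.trans hsub (List.subset_cons_self _ _), List.mem_cons_self, h',
      by simp only [List.length_cons]; omega⟩

theorem exists_extend_right (h : DupInv m σ₁ σ₂ L sw (some false)) (q : IndexPath m)
    (hq : (typeAt m σ₂ q).isSome) (hL : L.length + q.length < m) :
    ∃ L' p, L ⊆ L' ∧ (p, q) ∈ L' ∧ DupInv m σ₁ σ₂ L' sw (some false) ∧
      L'.length ≤ L.length + q.length := by
  obtain ⟨L', p, hsub, hqp, h', hlen⟩ := h.swap.exists_extend q hq (by simpa using hL)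
  refine ⟨L'.map Prod.swap, p, fun ab hab => ?_, by simpa using hqp, .of_swap ?_,
    by simpa using hlen⟩
  · exact List.mem_map.2 ⟨_, hsub (List.mem_map_of_mem hab), Prod.swap_swap _⟩
  · simpa using h'

theorem goodPairs (h : DupInv m σ₁ σ₂ L sw last)
    (ps : List ((PathTree m σ₁).V × (PathTree m σ₂).V))
    (hps : ∀ pr ∈ ps, (pr.1.1, pr.2.1) ∈ L) : GoodPairs (PathTree m σ₁) (PathTree m σ₂) ps := by
  intro u hu v hv
  have hu' := hps u hu
  have hv' := hps v hv
  refine ⟨?_, Subtype.ext_iff.trans ((h.eq_iff_eq _ _ _ _ hu' hv').trans Subtype.ext_iff.symm)⟩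
  simp only [PathTree.parent_eq_some_iff]
  constructor
  · rintro ⟨x, hx⟩
    obtain ⟨y, q, hq, hmem⟩ := h.parent_left x _ _ (hx ▸ hu')
    exact ⟨y, hq.trans (by rw [(h.eq_iff_eq _ _ _ _ hmem hv').1 rfl])⟩
  · rintro ⟨y, hy⟩
    obtain ⟨x, p, hp, hmem⟩ := h.parent_right _ y _ (hy ▸ hu')
    exact ⟨x, hp.trans (by rw [(h.eq_iff_eq _ _ _ _ hmem hv').2 rfl])⟩

end DupInv

def height (t : NodeType) : ℕ := 2 * t.1 + if t.2 then 0 else 1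

theorem height_lt_of_childType {m : ℕ} {x : Fin (m + 1)} {t t' : NodeType}
    (h : childType m x t = some t') : height t' < height t := by
  rcases t with ⟨_ | j, _ | _⟩ <;> simp only [childType, Option.some.injEq, reduceCtorEq] at h
  all_goals subst h; grind [height]

theorem length_add_height_le {m : ℕ} {σ t : NodeType} {p : IndexPath m}
    (h : typeAt m σ p = some t) : p.length + height t ≤ height σ := by
  induction p generalizing t with
  | nil => simp_all [typeAt]
  | cons x p ih =>
    obtain ⟨t', hp, ht'⟩ := Option.bind_eq_some_iff.1 h
    have := ih hp
    have := height_lt_of_childType ht'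
    simp only [List.length_cons]
    omega

theorem length_le_height {m : ℕ} {σ : NodeType} {p : IndexPath m}
    (h : (typeAt m σ p).isSome) : p.length ≤ height σ := by
  obtain ⟨t, ht⟩ := Option.isSome_iff_exists.1 h
  exact (Nat.le_add_right _ _).trans (length_add_height_le ht)

/-- Each round adds at most `height σ₁ + height σ₂` pairs to `L`, and Duplicator finds fresh
child indices as long as `L` is shorter than `m`. -/
def Position (m : ℕ) (σ₁ σ₂ : NodeType) (r sw : ℕ) (last : Option Bool)
    (ps : List ((PathTree m σ₁).V × (PathTree m σ₂).V)) : Prop :=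
  ∃ L, DupInv m σ₁ σ₂ L sw last ∧ (∀ pr ∈ ps, (pr.1.1, pr.2.1) ∈ L) ∧
    L.length + r * (height σ₁ + height σ₂) < m

namespace Position

variable {m : ℕ} {σ₁ σ₂ : NodeType} {r sw : ℕ} {last : Option Bool}
  {ps : List ((PathTree m σ₁).V × (PathTree m σ₂).V)}

theorem init (s m r : ℕ) (hs : 1 ≤ s) (hm : 1 + r * (height (s, true) + height (s, false)) < m) :
    Position m (s, true) (s, false) r (s - 1) none
      [((PathTree m (s, true)).root, (PathTree m (s, false)).root)] := by
  refine ⟨[([], [])], ⟨List.mem_singleton_self _, ?_, by simp +contextual, by simp, by simp,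
    by simp⟩, fun pr hpr => by rw [List.mem_singleton.1 hpr]; exact List.mem_singleton_self _,
    by simpa using hm⟩
  simp only [List.mem_singleton, Prod.mk.injEq, and_imp]
  rintro _ _ rfl rfl
  exact ⟨_, _, rfl, rfl, .one_two s (by simp [switchCost]; omega)⟩

theorem swap (h : Position m σ₁ σ₂ r sw last ps) :
    Position m σ₂ σ₁ r sw (last.map Bool.not) (ps.map Prod.swap) := by
  obtain ⟨L, hL, hps, hlen⟩ := h
  refine ⟨L.map Prod.swap, hL.swap, ?_, by simpa [add_comm] using hlen⟩
  intro pr hpr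
  obtain ⟨_, hab, rfl⟩ := List.mem_map.1 hpr
  exact List.mem_map_swap _ _ _ |>.2 (hps _ hab)

theorem step (h : Position m σ₁ σ₂ (r + 1) sw last ps) (hc : switchCost last true ≤ sw)
    (x : (PathTree m σ₁).V) :
    ∃ y, Position m σ₁ σ₂ r (sw - switchCost last true) (some true) ((x, y) :: ps) := by
  obtain ⟨L, hL, hps, hlen⟩ := h
  have hx := length_le_height x.2
  obtain ⟨L', q, hsub, hxq, hL', hlen'⟩ :=
    (hL.reanchor true hc).exists_extend x.1 x.2 (by rw [add_mul] at hlen; omega)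
  refine ⟨⟨q, hL'.isSome_right hxq⟩, L', hL', ?_, by rw [add_mul] at hlen; omega⟩
  rintro pr (_ | ⟨_, hpr⟩)
  exacts [hxq, hsub (hps pr hpr)]

theorem step_right (h : Position m σ₁ σ₂ (r + 1) sw last ps) (hc : switchCost last false ≤ sw)
    (y : (PathTree m σ₂).V) :
    ∃ x, Position m σ₁ σ₂ r (sw - switchCost last false) (some false) ((x, y) :: ps) := by
  obtain ⟨x, hx⟩ := h.swap.step (by rwa [switchCost_map_not]) y
  refine ⟨x, ?_⟩
  simpa [switchCost_map_not, Function.comp_def] using hx.swap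

theorem dupWins (h : Position m σ₁ σ₂ r sw last ps) :
    DupWinsEHRAux (PathTree m σ₁) (PathTree m σ₂) r sw last ps := by
  induction r generalizing sw last ps with
  | zero =>
    obtain ⟨L, hL, hps, -⟩ := h
    exact hL.goodPairs ps hps
  | succ r ih =>
    rintro (_ | _) hc
    · intro y
      obtain ⟨x, hx⟩ := h.step_right hc y
      exact ⟨x, ih hx⟩
    · intro x
      obtain ⟨y, hy⟩ := h.step hc x
      exact ⟨y, ih hy⟩

end Position

/-- For every non-negative integer `s`, the alternating quantifier
depth of `KEIN_s` on rooted, locally finite trees is exactly `s`: it is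
expressible by a sentence with at most `s` alternations, but every sentence
expressing it has at least `s` alternations. -/
theorem kein_aqd_exact (s : ℕ) :
    (∃ B : FOFormula, B.IsSentence ∧ B.aqd ≤ s ∧
        ∀ T : RTree, T.IsTree → (Models T B ↔ Models T (KEIN s))) ∧
    (∀ B : FOFormula, B.IsSentence →
        (∀ T : RTree, T.IsTree → (Models T B ↔ Models T (KEIN s))) → s ≤ B.aqd) := by
  refine ⟨⟨KEIN s, KEIN_isSentence s, KEIN_aqd_le s, fun _ _ => Iff.rfl⟩, fun B hB hequiv => ?_⟩
  by_contra! hlt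
  let m := B.qd * (height (s, true) + height (s, false)) + 2
  have hwin : DupWinsEHR (PathTree m (s, true)) (PathTree m (s, false)) (s - 1) B.qd :=
    (Position.init s m B.qd (by omega) (by omega)).dupWins
  obtain ⟨hK₁, hK₂⟩ := models_KEIN_pathTree m s
  have hB₁ := (hequiv _ (PathTree.isTree m _)).2 hK₁
  exact hK₂ ((hequiv _ (PathTree.isTree m _)).1 (hwin.models_imp_models hB le_rfl (by omega) hB₁))
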